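/- (Sobolev inequality) Let G : ℝ^N → ℝ be an admissible G-function and I = [a,b] a compact nondegenerate interval. Let u : I → ℝ^N be absolutely continuous with u(t) = u(a) + ∫_a^t u̇(s) ds for all t ∈ I, where u̇ ∈ L^G(I,ℝ^N), and set u_I = (1/(b−a)) ∫_I u(t) dt. Then ‖u − u_I‖_G ≤ (b − a) ‖u̇‖_G. -/

import Mathlib

open MeasureTheory Filter Set

noncomputable section

abbrev Euc (N : ℕ) := EuclideanSpace ℝ (Fin N)

/-- Admissible G-function: (G1)-(G6). -/
def IsGFunction {N : ℕ} (G : Euc N → ℝ) : Prop :=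
  G 0 = 0 ∧
  ConvexOn ℝ Set.univ G ∧
  (∀ x, G (-x) = G x) ∧
  (∀ C : ℝ, ∃ R : ℝ, ∀ x : Euc N, R ≤ ‖x‖ → C * ‖x‖ ≤ G x) ∧
  (∃ K₁ : ℝ, 2 ≤ K₁ ∧ ∃ M₁ : ℝ, 0 < M₁ ∧ ∀ x : Euc N, M₁ ≤ ‖x‖ → G ((2:ℝ) • x) ≤ K₁ * G x) ∧
  (∃ K₂ : ℝ, 1 ≤ K₂ ∧ ∃ M₂ : ℝ, 0 < M₂ ∧ ∀ x : Euc N, M₂ ≤ ‖x‖ → G x ≤ (1/(2*K₂)) * G (K₂ • x))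

/-- Membership in the anisotropic Orlicz space L^G(I, ℝ^N). -/
def MemLG {N : ℕ} (G : Euc N → ℝ) (I : Set ℝ) (u : ℝ → Euc N) : Prop :=
  AEStronglyMeasurable u (volume.restrict I) ∧ IntegrableOn (fun t => G (u t)) I

/-- Luxemburg norm. -/
def luxNorm {N : ℕ} (G : Euc N → ℝ) (I : Set ℝ) (u : ℝ → Euc N) : ℝ :=
  sInf {α : ℝ | 0 < α ∧ (∫ t in I, G (α⁻¹ • u t)) ≤ 1}

/-- Modular. -/
def modular {N : ℕ} (G : Euc N → ℝ) (I : Set ℝ) (u : ℝ → Euc N) : ℝ :=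
  ∫ t in I, G (u t)

/-- Fenchel conjugate. -/
def fenchelConj {N : ℕ} (G : Euc N → ℝ) (y : Euc N) : ℝ :=
  ⨆ x : Euc N, ((inner ℝ x y : ℝ) - G x)

/-!
The estimate already holds for the modular: `∫_I G((u - u_I)/(b - a)) ≤ ∫_I G(u̇)` on `I = [a, b]`.
For `s, t ∈ I`, Jensen's inequality over `I` applied to `u̇` cut off outside `[s, t]` gives
`G((u t - u s)/(b - a)) ≤ (b - a)⁻¹ ∫_I G(u̇)`, the cut-off being harmless since `G ≥ 0 = G 0`.
Averaging over `s` keeps `(u t - u_I)/(b - a)` in this closed convex sublevel set of `G`, and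
integrating over `t` gives the modular estimate. Applied to `u/α`, it makes `(b - a) α` admissible
in the Luxemburg norm of `u - u_I` whenever `α` is admissible for `u̇`. The Δ₂ condition makes every
`G(u̇/α)` integrable, which Jensen's inequality needs.
-/

open scoped ENNReal

section ConvexFunction

variable {E : Type*} [AddCommGroup E] [Module ℝ E] {G : E → ℝ}

lemma ConvexOn.map_smul_le_mul (hG : ConvexOn ℝ univ G) (hG0 : G 0 = 0) {r : ℝ} (hr₀ : 0 ≤ r)
    (hr₁ : r ≤ 1) (x : E) : G (r • x) ≤ r * G x := by
  have h := hG.2 (mem_univ x) (mem_univ 0) hr₀ (sub_nonneg.2 hr₁) (add_sub_cancel r 1)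
  simpa [hG0] using h

lemma ConvexOn.nonneg_of_even (hG : ConvexOn ℝ univ G) (hG0 : G 0 = 0)
    (heven : ∀ x, G (-x) = G x) (x : E) : 0 ≤ G x := by
  have h := hG.2 (mem_univ x) (mem_univ (-x)) (by norm_num : (0 : ℝ) ≤ 1 / 2)
    (by norm_num : (0 : ℝ) ≤ 1 / 2) (by norm_num)
  rw [smul_neg, add_neg_cancel, hG0, heven, smul_eq_mul] at h
  linarith

end ConvexFunction

section Doubling

variable {E α : Type*} [NormedAddCommGroup E] [NormedSpace ℝ E] {G : E → ℝ}
  [MeasurableSpace α] {μ : Measure α} [IsFiniteMeasure μ] {f : α → E}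

lemma integrable_comp_two_pow_smul (hGc : Continuous G) (hGnn : ∀ x, 0 ≤ G x) {K C : ℝ}
    (hdouble : ∀ x, G ((2 : ℝ) • x) ≤ K * G x + C) (hf : AEStronglyMeasurable f μ)
    (hGf : Integrable (fun t => G (f t)) μ) (n : ℕ) :
    Integrable (fun t => G ((2 : ℝ) ^ n • f t)) μ := by
  induction n with
  | zero => simpa using hGf
  | succ n ih =>
    refine ((ih.const_mul K).add (integrable_const C)).mono'
      (hGc.comp_aestronglyMeasurable (hf.const_smul _)) (ae_of_all _ fun t => ?_)
    rw [Real.norm_of_nonneg (hGnn _), pow_succ', mul_smul]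
    exact hdouble _

lemma integrable_comp_smul_of_doubling (hG : ConvexOn ℝ univ G) (hG0 : G 0 = 0)
    (hGc : Continuous G) (hGnn : ∀ x, 0 ≤ G x) {K C : ℝ}
    (hdouble : ∀ x, G ((2 : ℝ) • x) ≤ K * G x + C) (hf : AEStronglyMeasurable f μ)
    (hGf : Integrable (fun t => G (f t)) μ) {c : ℝ} (hc : 0 ≤ c) :
    Integrable (fun t => G (c • f t)) μ := by
  obtain ⟨n, hn⟩ := pow_unbounded_of_one_lt c one_lt_two
  have h2n : (0 : ℝ) < 2 ^ n := by positivity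
  have hr : c / 2 ^ n ≤ 1 := (div_le_one h2n).2 hn.le
  refine (integrable_comp_two_pow_smul hGc hGnn hdouble hf hGf n).mono'
    (hGc.comp_aestronglyMeasurable (hf.const_smul c)) (ae_of_all _ fun t => ?_)
  calc ‖G (c • f t)‖ = G ((c / 2 ^ n) • (2 : ℝ) ^ n • f t) := by
        rw [Real.norm_of_nonneg (hGnn _), smul_smul, div_mul_cancel₀ _ h2n.ne']
    _ ≤ (c / 2 ^ n) * G ((2 : ℝ) ^ n • f t) := hG.map_smul_le_mul hG0 (by positivity) hr _
    _ ≤ G ((2 : ℝ) ^ n • f t) := mul_le_of_le_one_left (hGnn _) hr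

end Doubling

section Jensen

variable {α E : Type*} [MeasurableSpace α] {μ : Measure α} [NormedAddCommGroup E]
  [NormedSpace ℝ E] [CompleteSpace E] {G : E → ℝ} {f : α → E} {s t : Set α}

lemma ConvexOn.map_setAverage_le_of_ae_le (hG : ConvexOn ℝ univ G) (hGc : Continuous G)
    (hs₀ : μ s ≠ 0) (hs : μ s ≠ ∞) (hf : IntegrableOn f s μ) {C : ℝ}
    (hC : ∀ᵐ x ∂μ.restrict s, G (f x) ≤ C) : G (⨍ x in s, f x ∂μ) ≤ C := by
  have hclosed : IsClosed {y ∈ univ | G y ≤ C} := by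
    simpa using isClosed_le hGc continuous_const
  exact ((hG.convex_le C).set_average_mem hclosed hs₀ hs
    (hC.mono fun x hx => ⟨mem_univ _, hx⟩) hf).2

lemma ConvexOn.map_inv_smul_setIntegral_le (hG : ConvexOn ℝ univ G) (hGc : Continuous G)
    (hG0 : G 0 = 0) (hGnn : ∀ x, 0 ≤ G x) (ht : MeasurableSet t) (hts : t ⊆ s)
    (hs₀ : μ s ≠ 0) (hs : μ s ≠ ∞) (hf : IntegrableOn f s μ)
    (hGf : IntegrableOn (fun x => G (f x)) s μ) :
    G ((μ.real s)⁻¹ • ∫ x in t, f x ∂μ) ≤ (μ.real s)⁻¹ * ∫ x in s, G (f x) ∂μ := by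
  have hcut : (fun x => G (t.indicator f x)) = t.indicator (fun x => G (f x)) :=
    (indicator_comp_of_zero hG0).symm
  have hjensen := hG.map_set_average_le hGc.continuousOn isClosed_univ hs₀ hs
    (ae_of_all _ fun _ => mem_univ _) (hf.indicator ht)
    (by rw [Function.comp_def, hcut]; exact hGf.indicator ht)
  rw [setAverage_eq, setAverage_eq, setIntegral_indicator ht, inter_eq_right.2 hts] at hjensen
  calc G ((μ.real s)⁻¹ • ∫ x in t, f x ∂μ)
      ≤ (μ.real s)⁻¹ * ∫ x in s, G (t.indicator f x) ∂μ := hjensen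
    _ = (μ.real s)⁻¹ * ∫ x in t, G (f x) ∂μ := by
        rw [hcut, setIntegral_indicator ht, inter_eq_right.2 hts]
    _ ≤ (μ.real s)⁻¹ * ∫ x in s, G (f x) ∂μ := by
        have hμ : 0 ≤ (μ.real s)⁻¹ := by positivity
        exact mul_le_mul_of_nonneg_left
          (setIntegral_mono_set hGf (ae_of_all _ fun x => hGnn _) hts.eventuallyLE) hμ

end Jensen

lemma luxNorm_le_mul_of_modular_le {N : ℕ} {G : Euc N → ℝ} {I : Set ℝ} {f g : ℝ → Euc N}
    {c : ℝ} (hc : 0 < c) (hf : ∃ α : ℝ, 0 < α ∧ ∫ t in I, G (α⁻¹ • f t) ≤ 1)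
    (hfg : ∀ α : ℝ, 0 < α → ∫ t in I, G (α⁻¹ • f t) ≤ 1 → ∫ t in I, G ((c * α)⁻¹ • g t) ≤ 1) :
    luxNorm G I g ≤ c * luxNorm G I f := by
  obtain ⟨α, hα, hαf⟩ := hf
  rw [luxNorm, luxNorm, ← smul_eq_mul, ← Real.sInf_smul_of_nonneg hc.le]
  refine csInf_le_csInf ⟨0, fun β hβ => hβ.1.le⟩ ⟨c • α, α, ⟨hα, hαf⟩, rfl⟩ ?_
  rintro _ ⟨β, ⟨hβ, hβf⟩, rfl⟩
  exact ⟨mul_pos hc hβ, hfg β hβ hβf⟩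

lemma continuousOn_of_eq_add_primitive {E : Type*} [NormedAddCommGroup E] [NormedSpace ℝ E]
    {u du : ℝ → E} {a b : ℝ} (hab : a ≤ b) (hdu : IntegrableOn du (Icc a b))
    (hu : ∀ t ∈ Icc a b, u t = u a + ∫ s in a..t, du s) : ContinuousOn u (Icc a b) := by
  have hprim := intervalIntegral.continuousOn_primitive_interval (μ := volume)
    (a := a) (b := b) (f := du) (by rwa [uIcc_of_le hab])
  rw [uIcc_of_le hab] at hprim
  exact (continuousOn_const.add hprim).congr hu

namespace IsGFunction

variable {N : ℕ} {G : Euc N → ℝ}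

lemma map_zero (hG : IsGFunction G) : G 0 = 0 := hG.1

lemma convexOn (hG : IsGFunction G) : ConvexOn ℝ univ G := hG.2.1

lemma map_neg (hG : IsGFunction G) (x : Euc N) : G (-x) = G x := hG.2.2.1 x

lemma nonneg (hG : IsGFunction G) (x : Euc N) : 0 ≤ G x :=
  hG.convexOn.nonneg_of_even hG.map_zero hG.map_neg x

lemma continuous (hG : IsGFunction G) : Continuous G :=
  continuousOn_univ.1 (hG.convexOn.continuousOn isOpen_univ)

lemma exists_doubling_bound (hG : IsGFunction G) :
    ∃ K C : ℝ, ∀ x, G ((2 : ℝ) • x) ≤ K * G x + C := by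
  obtain ⟨K, hK, M, hM, hΔ⟩ := hG.2.2.2.2.1
  obtain ⟨C, hC⟩ := (isCompact_closedBall (0 : Euc N) (2 * M)).exists_bound_of_continuousOn
    hG.continuous.continuousOn
  refine ⟨K, C, fun x => ?_⟩
  have hKG : 0 ≤ K * G x := mul_nonneg (by linarith) (hG.nonneg x)
  rcases le_or_gt M ‖x‖ with hx | hx
  · have hC₀ : 0 ≤ C := (norm_nonneg _).trans (hC 0 (by simp; positivity))
    linarith [hΔ x hx]
  · have h2x : (2 : ℝ) • x ∈ Metric.closedBall (0 : Euc N) (2 * M) := by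
      rw [mem_closedBall_zero_iff, norm_smul, Real.norm_two]
      linarith
    have hbound := hC _ h2x
    rw [Real.norm_eq_abs] at hbound
    linarith [le_abs_self (G ((2 : ℝ) • x))]

lemma integrableOn_comp_smul (hG : IsGFunction G) {I : Set ℝ} (hI : volume I ≠ ∞)
    {f : ℝ → Euc N} (hf : MemLG G I f) {c : ℝ} (hc : 0 ≤ c) :
    IntegrableOn (fun t => G (c • f t)) I := by
  have : IsFiniteMeasure (volume.restrict I) := isFiniteMeasure_restrict.2 hI
  obtain ⟨K, C, hdouble⟩ := hG.exists_doubling_bound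
  exact integrable_comp_smul_of_doubling hG.convexOn hG.map_zero
    hG.continuous hG.nonneg hdouble hf.1 hf.2 hc

lemma exists_modular_inv_smul_le_one (hG : IsGFunction G) {I : Set ℝ} {f : ℝ → Euc N}
    (hf : MemLG G I f) : ∃ α : ℝ, 0 < α ∧ ∫ t in I, G (α⁻¹ • f t) ≤ 1 := by
  set α := max 1 (∫ t in I, G (f t))
  have hα : 0 < α := one_pos.trans_le (le_max_left _ _)
  have hα₁ : α⁻¹ ≤ 1 := inv_le_one_of_one_le₀ (le_max_left _ _)
  refine ⟨α, hα, ?_⟩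
  calc ∫ t in I, G (α⁻¹ • f t) ≤ ∫ t in I, α⁻¹ * G (f t) :=
        integral_mono_of_nonneg (ae_of_all _ fun t => hG.nonneg _) (hf.2.const_mul _)
          (ae_of_all _ fun t =>
            hG.convexOn.map_smul_le_mul hG.map_zero (inv_nonneg.2 hα.le) hα₁ _)
    _ = α⁻¹ * ∫ t in I, G (f t) := integral_const_mul _ _
    _ ≤ α⁻¹ * α := by gcongr; exact le_max_right _ _
    _ = 1 := inv_mul_cancel₀ hα.ne'

variable {a b : ℝ}

lemma map_inv_smul_intervalIntegral_le (hG : IsGFunction G) (hab : a < b) {v : ℝ → Euc N}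
    (hv : IntegrableOn v (Icc a b)) (hGv : IntegrableOn (fun x => G (v x)) (Icc a b)) {s t : ℝ}
    (hs : s ∈ Icc a b) (ht : t ∈ Icc a b) :
    G ((b - a)⁻¹ • ∫ x in s..t, v x) ≤ (b - a)⁻¹ * ∫ x in Icc a b, G (v x) := by
  have hIoc : ∀ {s t : ℝ}, s ∈ Icc a b → t ∈ Icc a b →
      G ((b - a)⁻¹ • ∫ x in Ioc s t, v x) ≤ (b - a)⁻¹ * ∫ x in Icc a b, G (v x) :=
    fun hs ht => by
      simpa only [Real.volume_real_Icc_of_le hab.le] using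
        hG.convexOn.map_inv_smul_setIntegral_le hG.continuous hG.map_zero hG.nonneg
          measurableSet_Ioc (Ioc_subset_Icc_self.trans (Icc_subset_Icc hs.1 ht.2))
          (by simp [hab]) (measure_Icc_lt_top (μ := volume)).ne hv hGv
  rcases le_total s t with hst | hts
  · rw [intervalIntegral.integral_of_le hst]
    exact hIoc hs ht
  · rw [intervalIntegral.integral_of_ge hts, smul_neg, hG.map_neg]
    exact hIoc ht hs

variable {u du : ℝ → Euc N}

lemma map_inv_smul_sub_le (hG : IsGFunction G) (hab : a < b)
    (hdu : IntegrableOn du (Icc a b)) (hGdu : IntegrableOn (fun x => G (du x)) (Icc a b))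
    (hu : ∀ t ∈ Icc a b, u t = u a + ∫ s in a..t, du s) {s t : ℝ}
    (hs : s ∈ Icc a b) (ht : t ∈ Icc a b) :
    G ((b - a)⁻¹ • (u t - u s)) ≤ (b - a)⁻¹ * ∫ x in Icc a b, G (du x) := by
  have hdu' : ∀ {r}, r ∈ Icc a b → IntervalIntegrable du volume a r := fun hr =>
    (hdu.mono_set (by rw [uIcc_of_le hr.1]; exact Icc_subset_Icc le_rfl hr.2)).intervalIntegrable
  rw [hu t ht, hu s hs, add_sub_add_left_eq_sub,
    intervalIntegral.integral_interval_sub_left (hdu' ht) (hdu' hs)]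
  exact hG.map_inv_smul_intervalIntegral_le hab hdu hGdu hs ht

theorem setIntegral_map_inv_smul_sub_setAverage_le (hG : IsGFunction G) (hab : a < b)
    (hdu : IntegrableOn du (Icc a b)) (hGdu : IntegrableOn (fun x => G (du x)) (Icc a b))
    (hu : ∀ t ∈ Icc a b, u t = u a + ∫ s in a..t, du s) :
    ∫ t in Icc a b, G ((b - a)⁻¹ • (u t - ⨍ s in Icc a b, u s)) ≤
      ∫ t in Icc a b, G (du t) := by
  have hI₀ : volume (Icc a b) ≠ 0 := by simp [hab]
  have hI : volume (Icc a b) ≠ ∞ := measure_Icc_lt_top.ne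
  have hui : IntegrableOn u (Icc a b) :=
    (continuousOn_of_eq_add_primitive hab.le hdu hu).integrableOn_Icc
  have hpt : ∀ t ∈ Icc a b, G ((b - a)⁻¹ • (u t - ⨍ s in Icc a b, u s)) ≤
      (b - a)⁻¹ * ∫ x in Icc a b, G (du x) := by
    intro t ht
    have havg : (b - a)⁻¹ • (u t - ⨍ s in Icc a b, u s) =
        ⨍ s in Icc a b, (b - a)⁻¹ • (u t - u s) := by
      rw [setAverage_eq, setAverage_eq, integral_smul,
        integral_sub (integrableOn_const (C := u t) hI) hui, setIntegral_const,
        Real.volume_real_Icc_of_le hab.le]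
      congr 1
      rw [smul_sub, smul_smul, inv_mul_cancel₀ (sub_pos.2 hab).ne', one_smul]
    rw [havg]
    exact hG.convexOn.map_setAverage_le_of_ae_le (f := fun s => (b - a)⁻¹ • (u t - u s))
      hG.continuous hI₀ hI
      (by exact ((integrableOn_const hI).sub hui).smul (b - a)⁻¹)
      ((ae_restrict_mem measurableSet_Icc).mono fun s hs =>
        hG.map_inv_smul_sub_le hab hdu hGdu hu hs ht)
  calc ∫ t in Icc a b, G ((b - a)⁻¹ • (u t - ⨍ s in Icc a b, u s))
      ≤ ∫ t in Icc a b, (b - a)⁻¹ * ∫ x in Icc a b, G (du x) :=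
        integral_mono_of_nonneg (ae_of_all _ fun t => hG.nonneg _) (integrableOn_const hI)
          ((ae_restrict_mem measurableSet_Icc).mono hpt)
    _ = ∫ t in Icc a b, G (du t) := by
        rw [setIntegral_const, Real.volume_real_Icc_of_le hab.le, smul_eq_mul,
          mul_inv_cancel_left₀ (sub_pos.2 hab).ne']

end IsGFunction

theorem sobolev_inequality_general {N : ℕ} (G : Euc N → ℝ) (hG : IsGFunction G)
    (a b : ℝ) (hab : a < b) (u du : ℝ → Euc N)
    (hdu : MemLG G (Icc a b) du) (hint : IntegrableOn du (Icc a b))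
    (hu : ∀ t ∈ Icc a b, u t = u a + ∫ s in a..t, du s) :
    luxNorm G (Icc a b)
        (fun t => u t - (b - a)⁻¹ • ∫ s in Icc a b, u s) ≤
      (b - a) * luxNorm G (Icc a b) du := by
  have hI : volume (Icc a b) ≠ ∞ := measure_Icc_lt_top.ne
  refine luxNorm_le_mul_of_modular_le (sub_pos.2 hab) (hG.exists_modular_inv_smul_le_one hdu)
    fun α hα hmod => ?_
  have hscaled : ∀ t ∈ Icc a b, α⁻¹ • u t = α⁻¹ • u a + ∫ s in a..t, α⁻¹ • du s :=
    fun t ht => by rw [hu t ht, smul_add, intervalIntegral.integral_smul]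
  have hpoincare := hG.setIntegral_map_inv_smul_sub_setAverage_le (u := fun t => α⁻¹ • u t) hab
    (hint.smul α⁻¹) (hG.integrableOn_comp_smul hI hdu (inv_nonneg.2 hα.le)) hscaled
  refine le_trans (le_of_eq ?_) (hpoincare.trans hmod)
  congr 1 with t
  congr 1
  rw [setAverage_eq, Real.volume_real_Icc_of_le hab.le, integral_smul, mul_inv, mul_smul]
  congr 1
  rw [smul_sub, smul_comm α⁻¹ (b - a)⁻¹]

/-- Sobolev inequality ‖u − u_I‖_G ≤ (b − a) ‖u̇‖_G. -/
theorem sobolev_inequality {N : ℕ} (hN : 1 ≤ N) (G : Euc N → ℝ) (hG : IsGFunction G)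
    (a b : ℝ) (hab : a < b) (u du : ℝ → Euc N)
    (hdu : MemLG G (Icc a b) du) (hint : IntegrableOn du (Icc a b))
    (hu : ∀ t ∈ Icc a b, u t = u a + ∫ s in a..t, du s) :
    luxNorm G (Icc a b)
        (fun t => u t - (b - a)⁻¹ • ∫ s in Icc a b, u s) ≤
      (b - a) * luxNorm G (Icc a b) du :=
  sobolev_inequality_general G hG a b hab u du hdu hint hu

end
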